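/- arXiv:math/0604019 — 4 statements merged into one kernel-verified Lean document; each statement's English description precedes it below -/
import Mathlib

section
/- For any integer a and any positive integer m, m divides (a^m − a) · (m−1)!. -/
open Finset
open scoped Nat

/- f(a) = (a^m - a)(m-1)! vanishes at 0, and f(a+1) - f(a) = (m-1)! ∑_{0<k<m} C(m,k) a^k
is divisible by m because k C(m,k) = m C(m-1,k-1) and k ∣ (m-1)!. So m ∣ f(a) by induction on a ∈ ℤ. -/

theorem Nat.dvd_choose_mul_factorial_pred {m k : ℕ} (hk : 0 < k) (hkm : k < m) :
    m ∣ m.choose k * (m - 1)! := by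
  obtain ⟨c, hc⟩ : k ∣ (m - 1)! := Nat.dvd_factorial hk (by omega)
  have hsucc : m.choose k * k = m * (m - 1).choose (k - 1) := by
    obtain ⟨n, rfl⟩ : ∃ n, m = n + 1 := ⟨m - 1, by omega⟩
    obtain ⟨j, rfl⟩ : ∃ j, k = j + 1 := ⟨k - 1, by omega⟩
    simpa [mul_comm] using (Nat.add_one_mul_choose_eq n j).symm
  exact ⟨(m - 1).choose (k - 1) * c, by rw [hc, ← mul_assoc, hsucc, mul_assoc]⟩

theorem add_one_pow_sub_sub_pow_sub {R : Type*} [CommRing R] (a : R) {m : ℕ} (hm : 0 < m) :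
    ((a + 1) ^ m - (a + 1)) - (a ^ m - a) = ∑ k ∈ Ico 1 m, a ^ k * (m.choose k : R) := by
  rw [add_pow, sum_range_succ, sum_range_eq_add_Ico _ hm]
  simp only [one_pow, mul_one, pow_zero, Nat.choose_zero_right, Nat.choose_self, Nat.cast_one]
  ring

theorem Int.dvd_pow_sub_mul_factorial_succ_sub (a : ℤ) {m : ℕ} (hm : 0 < m) :
    (m : ℤ) ∣ ((a + 1) ^ m - (a + 1)) * ((m - 1)! : ℕ) - (a ^ m - a) * ((m - 1)! : ℕ) := by
  rw [← sub_mul, add_one_pow_sub_sub_pow_sub a hm, sum_mul]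
  refine dvd_sum fun k hk => ?_
  rw [mem_Ico] at hk
  rw [mul_assoc, ← Nat.cast_mul]
  exact (Int.natCast_dvd_natCast.mpr (Nat.dvd_choose_mul_factorial_pred hk.1 hk.2)).mul_left _

theorem stmt_1 (a : ℤ) (m : ℕ) (hm : 0 < m) :
    (m : ℤ) ∣ (a ^ m - a) * (Nat.factorial (m - 1) : ℤ) := by
  induction a using Int.induction_on with
  | zero => simp [zero_pow hm.ne']
  | succ n ih => exact (dvd_iff_dvd_of_dvd_sub (Int.dvd_pow_sub_mul_factorial_succ_sub n hm)).mpr ih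
  | pred n ih =>
    have step := Int.dvd_pow_sub_mul_factorial_succ_sub (-n - 1) hm
    rw [sub_add_cancel] at step
    exact (dvd_iff_dvd_of_dvd_sub step).mp ih
end

section
/- For all positive integers n and k with 1 ≤ k ≤ n, n! ≥ k^(n−k+1) · ∏_{i=0}^{k−1} ⌊(n−i)/k⌋!. -/
theorem stmt_2 (n k : ℕ) (hk : 1 ≤ k) (hkn : k ≤ n) :
    Nat.factorial n ≥ k ^ (n - k + 1) * ∏ i ∈ Finset.range k, Nat.factorial ((n - i) / k) := by
  induction n, hkn using Nat.le_induction with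
  | base =>
    have hp : ∏ i ∈ Finset.range k, Nat.factorial ((k - i) / k) = 1 := by
      apply Finset.prod_eq_one
      intro i hi
      rcases Nat.eq_zero_or_pos i with h | h
      · subst h
        simp [Nat.div_self hk]
      · rw [Nat.div_eq_of_lt (by simp at hi; omega)]
        rfl
    rw [hp]
    have h1 : k - k + 1 = 1 := by omega
    rw [h1]
    simpa using Nat.self_le_factorial k
  | succ n hn ih =>
    obtain ⟨m, rfl⟩ : ∃ m, k = m + 1 := ⟨k - 1, by omega⟩
    set q := (n + 1) / (m + 1) with hq
    have hq1 : 1 ≤ q := (Nat.one_le_div_iff (by omega)).2 (by omega)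
    have hsub : (n - m) / (m + 1) = q - 1 := by
      have := Nat.div_eq_sub_div (a := n + 1) (b := m + 1) (by omega) (by omega)
      have h2 : n + 1 - (m + 1) = n - m := by omega
      rw [h2] at this
      omega
    have hA : ∏ i ∈ Finset.range (m + 1), Nat.factorial ((n + 1 - i) / (m + 1))
        = q * ∏ i ∈ Finset.range (m + 1), Nat.factorial ((n - i) / (m + 1)) := by
      rw [Finset.prod_range_succ', Finset.prod_range_succ]
      have h1 : ∀ i, n + 1 - (i + 1) = n - i := by omega
      simp only [h1, Nat.sub_zero, ← hq, hsub]
      have hfac : Nat.factorial q = q * Nat.factorial (q - 1) := by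
        conv_lhs => rw [show q = (q - 1) + 1 by omega]
        rw [Nat.factorial_succ]
        congr 2
        omega
      rw [hfac]; ring
    have hexp : n + 1 - (m + 1) + 1 = (n - (m + 1) + 1) + 1 := by omega
    rw [ge_iff_le, hA, hexp, pow_succ]
    calc (m + 1) ^ (n - (m + 1) + 1) * (m + 1) *
          (q * ∏ i ∈ Finset.range (m + 1), Nat.factorial ((n - i) / (m + 1)))
        = ((m + 1) * q) *
          ((m + 1) ^ (n - (m + 1) + 1) * ∏ i ∈ Finset.range (m + 1),
            Nat.factorial ((n - i) / (m + 1))) := by ring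
      _ ≤ (n + 1) * Nat.factorial n := by
          apply Nat.mul_le_mul
          · rw [mul_comm]; exact Nat.div_mul_le_self _ _
          · exact ih
      _ = Nat.factorial (n + 1) := (Nat.factorial_succ n).symm
end

section
/- A positive integer n > 1 satisfies: the product of its proper divisors (divisors d with 1 ≤ d < n) is at most n, if and only if n is of the form p, p², p³, or p·q for distinct primes p and q. -/
open Finset

private lemma tau_ge_two {n : ℕ} (hn : 1 < n) : 2 ≤ #n.divisors := by
  have h0 : n ≠ 0 := by omega
  have h1 : ({1, n} : Finset ℕ) ⊆ n.divisors := by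
    intro d hd
    simp only [mem_insert, mem_singleton] at hd
    rcases hd with rfl | rfl <;> simp [Nat.mem_divisors, h0]
  have : #({1, n} : Finset ℕ) = 2 := by
    rw [card_insert_of_notMem (by simp; omega), card_singleton]
  calc 2 = #({1, n} : Finset ℕ) := this.symm
    _ ≤ #n.divisors := card_le_card h1

private lemma sq_prod_divisors {n : ℕ} (h0 : n ≠ 0) :
    (∏ d ∈ n.divisors, d) ^ 2 = n ^ #n.divisors := by
  have : (∏ d ∈ n.divisors, d) ^ 2
      = (∏ d ∈ n.divisors, d) * ∏ d ∈ n.divisors, (n / d) := by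
    have := Nat.prod_div_divisors n (id : ℕ → ℕ)
    simp only [id] at this
    rw [this]; ring
  rw [this, ← Finset.prod_mul_distrib,
    Finset.prod_congr rfl (fun d hd => Nat.mul_div_cancel' (Nat.mem_divisors.mp hd).1),
    Finset.prod_const]

private lemma key_iff {n : ℕ} (hn : 1 < n) :
    (∏ d ∈ n.properDivisors, d) ≤ n ↔ #n.divisors ≤ 4 := by
  have h0 : n ≠ 0 := by omega
  have hτ : 2 ≤ #n.divisors := tau_ge_two hn
  have hcons : ∏ d ∈ n.divisors, d = n * ∏ d ∈ n.properDivisors, d := by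
    rw [← Nat.cons_self_properDivisors h0, Finset.prod_cons]
  have hsq := sq_prod_divisors h0
  rw [hcons] at hsq
  set P := ∏ d ∈ n.properDivisors, d with hP
  have hkey : P ^ 2 = n ^ (#n.divisors - 2) := by
    have h2 : n ^ 2 * P ^ 2 = n ^ 2 * n ^ (#n.divisors - 2) := by
      rw [← pow_add]
      have : 2 + (#n.divisors - 2) = #n.divisors := by omega
      rw [this, ← hsq]; ring
    exact Nat.eq_of_mul_eq_mul_left (by positivity) h2
  constructor
  · intro h
    have h2 : P ^ 2 ≤ n ^ 2 := Nat.pow_le_pow_left h 2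
    rw [hkey] at h2
    have := (Nat.pow_le_pow_iff_right hn).mp h2
    omega
  · intro h
    have h2 : n ^ (#n.divisors - 2) ≤ n ^ 2 :=
      Nat.pow_le_pow_right (by omega) (by omega)
    rw [← hkey] at h2
    exact le_of_pow_le_pow_left₀ (by norm_num) (Nat.zero_le n) h2

theorem stmt_4 (n : ℕ) (hn : 1 < n) :
    (∏ d ∈ n.properDivisors, d) ≤ n ↔
      (∃ p : ℕ, p.Prime ∧ n = p) ∨
      (∃ p : ℕ, p.Prime ∧ n = p ^ 2) ∨
      (∃ p : ℕ, p.Prime ∧ n = p ^ 3) ∨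
      (∃ p q : ℕ, p.Prime ∧ q.Prime ∧ p ≠ q ∧ n = p * q) := by
  have h0 : n ≠ 0 := by omega
  rw [key_iff hn]
  constructor
  · intro h
    have hcd := Nat.card_divisors h0
    have hfac2 : ∀ p ∈ n.primeFactors, 1 ≤ n.factorization p := fun p hp =>
      (Nat.Prime.factorization_pos_of_dvd (Nat.prime_of_mem_primeFactors hp) h0
        (Nat.dvd_of_mem_primeFactors hp))
    -- number of prime factors ≤ 2
    have hcard : #n.primeFactors ≤ 2 := by
      by_contra hc
      push_neg at hc
      have h8 : 2 ^ #n.primeFactors ≤ #n.divisors := by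
        rw [hcd, ← Finset.prod_const]
        exact Finset.prod_le_prod (fun _ _ => by norm_num)
          (fun p hp => by have := hfac2 p hp; omega)
      have : (8 : ℕ) ≤ 2 ^ #n.primeFactors :=
        le_trans (by norm_num) (Nat.pow_le_pow_right (by norm_num) hc)
      omega
    have hne : n.primeFactors.Nonempty := Nat.nonempty_primeFactors.mpr hn
    have hcard1 : 1 ≤ #n.primeFactors := Finset.card_pos.mpr hne
    interval_cases hcc : #n.primeFactors
    · -- one prime factor: n = p ^ e
      obtain ⟨p, hp⟩ := Finset.card_eq_one.mp hcc
      have hpprime : p.Prime := Nat.prime_of_mem_primeFactors (hp ▸ Finset.mem_singleton_self p)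
      set e := n.factorization p with he
      have hfe : n.factorization = Finsupp.single p e :=
        (Finsupp.support_eq_singleton.mp (by rw [Nat.support_factorization]; exact hp)).2
      have hnpe : n = p ^ e := by
        conv_lhs => rw [← Nat.factorization_prod_pow_eq_self h0]
        rw [hfe, Finsupp.prod_single_index]
        simp
      have he1 : 1 ≤ e := hfac2 p (hp ▸ Finset.mem_singleton_self p)
      have he3 : e ≤ 3 := by
        rw [hcd, hp, Finset.prod_singleton] at h
        omega
      interval_cases e
      · exact Or.inl ⟨p, hpprime, by simpa using hnpe⟩
      · exact Or.inr (Or.inl ⟨p, hpprime, hnpe⟩)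
      · exact Or.inr (Or.inr (Or.inl ⟨p, hpprime, hnpe⟩))
    · -- two prime factors: n = p * q
      obtain ⟨p, q, hpq, hp⟩ := Finset.card_eq_two.mp hcc
      have hpmem : p ∈ n.primeFactors := hp ▸ by simp
      have hqmem : q ∈ n.primeFactors := hp ▸ by simp
      have hpprime : p.Prime := Nat.prime_of_mem_primeFactors hpmem
      have hqprime : q.Prime := Nat.prime_of_mem_primeFactors hqmem
      set a := n.factorization p with ha
      set b := n.factorization q with hb
      have ha1 : 1 ≤ a := hfac2 p hpmem
      have hb1 : 1 ≤ b := hfac2 q hqmem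
      have hab : (a + 1) * (b + 1) ≤ 4 := by
        rw [hcd, hp, Finset.prod_insert (by simpa using hpq), Finset.prod_singleton] at h
        exact h
      have ha' : a = 1 := by nlinarith
      have hb' : b = 1 := by nlinarith
      have hnpq : n = p ^ a * q ^ b := by
        conv_lhs => rw [← Nat.factorization_prod_pow_eq_self h0]
        rw [Finsupp.prod]
        rw [Nat.support_factorization, hp,
          Finset.prod_insert (by simpa using hpq), Finset.prod_singleton]
      refine Or.inr (Or.inr (Or.inr ⟨p, q, hpprime, hqprime, hpq, ?_⟩))
      rw [hnpq, ha', hb', pow_one, pow_one]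
  · rintro (⟨p, hp, rfl⟩ | ⟨p, hp, rfl⟩ | ⟨p, hp, rfl⟩ | ⟨p, q, hp, hq, hpq, rfl⟩)
    · rw [hp.divisors,
        Finset.card_insert_of_notMem (by simp [hp.one_lt.ne]), Finset.card_singleton]
      norm_num
    · have := Nat.card_divisors (n := p ^ 2) (pow_ne_zero 2 hp.pos.ne')
      rw [this, Nat.primeFactors_prime_pow (by norm_num) hp, Finset.prod_singleton,
        hp.factorization_pow]
      simp
    · have := Nat.card_divisors (n := p ^ 3) (pow_ne_zero 3 hp.pos.ne')
      rw [this, Nat.primeFactors_prime_pow (by norm_num) hp, Finset.prod_singleton,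
        hp.factorization_pow]
      simp
    · have hcop : p.Coprime q := (Nat.coprime_primes hp hq).mpr hpq
      have h2 : ∀ r : ℕ, r.Prime → #r.divisors = 2 := fun r hr => by
        rw [hr.divisors,
          Finset.card_insert_of_notMem (by simp [hr.one_lt.ne]), Finset.card_singleton]
      rw [hcop.card_divisors_mul, h2 p hp, h2 q hq]
end

section
/- Define the sequence a by a(1) = a(2) = 1, a(2p+1) = a(p+1) − 1 and a(2p+2) = a(p+1) + 1 for all p ≥ 1. Then for every p ≥ 1, a(1) + a(2) + ... + a(p) = a(p+1) + a(p+2) + ... + a(2p). -/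
/-- The special partial perfect additive sequence:
`a 1 = a 2 = 1`, `a (2p+1) = a (p+1) - 1`, `a (2p+2) = a (p+1) + 1` for `p ≥ 1`. -/
def a : ℕ → ℤ
  | 0 => 0
  | 1 => 1
  | 2 => 1
  | (n + 3) =>
      if (n + 3) % 2 = 1 then a ((n + 3 + 1) / 2) - 1 else a ((n + 3) / 2) + 1
  decreasing_by all_goals omega

lemma a_pair (p : ℕ) (hp : 1 ≤ p) : a (2 * p + 1) + a (2 * p + 2) = 2 * a (p + 1) := by
  obtain ⟨q, rfl⟩ := Nat.exists_eq_add_of_le hp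
  have h1 : 2 * (1 + q) + 1 = (2 * q) + 3 := by ring
  have h2 : 2 * (1 + q) + 2 = (2 * q + 1) + 3 := by ring
  rw [h1, h2, a, a]
  have : (2 * q + 3) % 2 = 1 := by omega
  have : (2 * q + 1 + 3) % 2 = 0 := by omega
  simp only [*]
  norm_num
  rw [show (2 * q + 3 + 1) / 2 = q + 2 from by omega,
    show 1 + q + 1 = q + 2 from by omega]
  ring

lemma double_sum (p : ℕ) (hp : 1 ≤ p) :
    ∑ i ∈ Finset.Icc 1 (2 * p), a i = 2 * ∑ i ∈ Finset.Icc 1 p, a i := by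
  induction p with
  | zero => omega
  | succ n ih =>
    rcases Nat.eq_or_lt_of_le hp with h | h
    · have hn0 : n = 0 := by omega
      subst hn0
      simp [show Finset.Icc 1 2 = {1, 2} from by decide, a]
    · have hn : 1 ≤ n := by omega
      have ihn := ih hn
      have e : 2 * (n + 1) = (2 * n + 1) + 1 := by ring
      rw [e, Finset.sum_Icc_succ_top (by omega), Finset.sum_Icc_succ_top (by omega),
        Finset.sum_Icc_succ_top (by omega : 1 ≤ n + 1), ihn]
      have := a_pair n hn
      have e2 : 2 * n + 1 + 1 = 2 * n + 2 := by ring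
      rw [e2]
      linarith

theorem stmt_17 (p : ℕ) (hp : 1 ≤ p) :
    ∑ i ∈ Finset.Icc 1 p, a i = ∑ i ∈ Finset.Icc (p + 1) (2 * p), a i := by
  have h := double_sum p hp
  have hsplit : ∑ i ∈ Finset.Icc 1 (2 * p), a i
      = ∑ i ∈ Finset.Icc 1 p, a i + ∑ i ∈ Finset.Icc (p + 1) (2 * p), a i := by
    rw [show Finset.Icc 1 p = Finset.Ioc 0 p from Finset.Icc_add_one_left_eq_Ioc 0 p,
      show Finset.Icc (p + 1) (2 * p) = Finset.Ioc p (2 * p) from Finset.Icc_add_one_left_eq_Ioc p (2 * p),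
      show Finset.Icc 1 (2 * p) = Finset.Ioc 0 (2 * p) from Finset.Icc_add_one_left_eq_Ioc 0 (2 * p),
      Finset.sum_Ioc_consecutive a (Nat.zero_le p) (by omega)]
  linarith
end
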